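/- arXiv:0910.1831 — 2 statements merged into one kernel-verified Lean document; each statement's English description precedes it below -/
import Mathlib

section
/- (Alili–Doney identity, strict case) For a random walk Z_n with i.i.d. integer steps and z > 0, one has P(Z_n = z, Z_k > 0 for k = 1,...,n) = (1/n) · E[N^+(z) · 1{Z_n = z}], where N^+(z) counts the strict ascending ladder epochs m ≥ 0 at which Z_m < z. -/
/-!
Fix a strict ladder epoch `m` with `Z_m < z = Z_n`, and let `q` be the last time at which the
path attains its minimum over `[m, n]`. Rereading the increments in the order `(q, n]`, `(m, q]`,
then `[0, m)` backwards produces a path that stays positive up to time `n`, still ends at `z`,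
and whose last minimum over `[n - q, n]` sits at time `n - m`; this is a bijection between the
two kinds of configurations indexed by `(m, q)`. Since it only permutes i.i.d. increments, both
events have the same probability. Summing over `(m, q)`: every ladder epoch below `z` has exactly
one `q`, which gives `E[N⁺(z); Z_n = z]`, while for a positive path every `q < n` has exactly one
`m`, which gives `n · P(Z_n = z, Z_1, …, Z_n > 0)`.
-/

open MeasureTheory ProbabilityTheory

namespace AliliDoney

open Finset

def partialSum (x : ℕ → ℤ) (k : ℕ) : ℤ := ∑ i ∈ range k, x i

@[simp]
lemma partialSum_zero (x : ℕ → ℤ) : partialSum x 0 = 0 := sum_range_zero x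

lemma partialSum_sub_partialSum (x : ℕ → ℤ) {a b : ℕ} (h : a ≤ b) :
    partialSum x b - partialSum x a = ∑ i ∈ Ico a b, x i :=
  (sum_Ico_eq_sub x h).symm

lemma partialSum_comp_sub_of_shift {x : ℕ → ℤ} {σ : ℕ → ℕ} {a b c : ℕ} (hab : a ≤ b)
    (hσ : ∀ i, a ≤ i → i < b → σ i = c + (i - a)) :
    partialSum (x ∘ σ) b - partialSum (x ∘ σ) a = partialSum x (c + (b - a)) - partialSum x c := by
  rw [partialSum_sub_partialSum _ hab, partialSum_sub_partialSum _ (by omega),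
    sum_Ico_eq_sum_range, sum_Ico_eq_sum_range, Nat.add_sub_cancel_left]
  refine sum_congr rfl fun k hk => ?_
  rw [mem_range] at hk
  simp only [Function.comp_apply, hσ (a + k) (by omega) (by omega), Nat.add_sub_cancel_left]

lemma partialSum_comp_sub_of_reflect {x : ℕ → ℤ} {σ : ℕ → ℕ} {a b c : ℕ} (hab : a ≤ b)
    (hbc : b - a ≤ c) (hσ : ∀ i, a ≤ i → i < b → σ i = c - 1 - (i - a)) :
    partialSum (x ∘ σ) b - partialSum (x ∘ σ) a = partialSum x c - partialSum x (c - (b - a)) := by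
  rw [partialSum_sub_partialSum _ hab, partialSum_sub_partialSum _ (by omega),
    sum_Ico_eq_sum_range, sum_Ico_eq_sum_range, Nat.sub_sub_self hbc]
  conv_rhs => rw [← sum_range_reflect]
  refine sum_congr rfl fun k hk => ?_
  rw [mem_range] at hk
  simp only [Function.comp_apply, hσ (a + k) (by omega) (by omega)]
  congr 1
  omega

@[fun_prop]
lemma measurable_partialSum (k : ℕ) : Measurable fun x : ℕ → ℤ => partialSum x k := by
  unfold partialSum
  fun_prop

def IsLadderEpoch {α : Type*} [Preorder α] (s : ℕ → α) (m : ℕ) : Prop := ∀ k < m, s k < s m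

def StaysPositive (s : ℕ → ℤ) (n : ℕ) : Prop := ∀ k, 1 ≤ k → k ≤ n → 0 < s k

def IsLastMinOn {α : Type*} [LinearOrder α] (f : ℕ → α) (a b p : ℕ) : Prop :=
  a ≤ p ∧ p ≤ b ∧ (∀ k, a ≤ k → k < p → f p ≤ f k) ∧ ∀ k, p < k → k ≤ b → f p < f k

section LastMin

variable {α : Type*} [LinearOrder α] {f : ℕ → α} {a b p p' : ℕ}

lemma exists_isLastMinOn (f : ℕ → α) (h : a ≤ b) : ∃ p, IsLastMinOn f a b p := by
  induction b, h using Nat.le_induction with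
  | base => exact ⟨a, le_rfl, le_rfl, fun k h1 h2 => by omega, fun k h1 h2 => by omega⟩
  | succ b _ ih =>
    obtain ⟨p, hap, hpb, hle, hlt⟩ := ih
    by_cases h : f (b + 1) ≤ f p
    · refine ⟨b + 1, by omega, le_rfl, fun k hak hkb => ?_, fun k h1 h2 => by omega⟩
      rcases lt_trichotomy k p with hkp | rfl | hpk
      · exact h.trans (hle k hak hkp)
      · exact h
      · exact h.trans (hlt k hpk (by omega)).le
    · refine ⟨p, hap, by omega, hle, fun k hpk hkb => ?_⟩
      rcases (show k ≤ b ∨ k = b + 1 by omega) with hk | rfl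
      · exact hlt k hpk hk
      · exact lt_of_not_ge h

lemma IsLastMinOn.unique (hp : IsLastMinOn f a b p) (hp' : IsLastMinOn f a b p') : p = p' := by
  obtain ⟨hap, hpb, hle, hlt⟩ := hp
  obtain ⟨hap', hpb', hle', hlt'⟩ := hp'
  by_contra hne
  rcases Nat.lt_or_gt_of_ne hne with h | h
  · exact (hlt p' h hpb').not_ge (hle' p hap h)
  · exact (hlt' p h hpb).not_ge (hle p' hap' h)

end LastMin

lemma staysPositive_iff_of_isLastMinOn {s : ℕ → ℤ} {a n d : ℕ} (hd : 1 ≤ d)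
    (hmin : IsLastMinOn s a n d) :
    StaysPositive s n ↔ StaysPositive s a ∧ 0 < s d := by
  obtain ⟨had, hdn, hle, hlt⟩ := hmin
  refine ⟨fun h => ⟨fun k h1 h2 => h k h1 (by omega), h d hd hdn⟩, fun ⟨ha, hsd⟩ k h1 h2 => ?_⟩
  rcases le_or_gt k a with hka | hak
  · exact ha k h1 hka
  rcases lt_trichotomy k d with hkd | rfl | hdk
  · exact hsd.trans_le (hle k hak.le hkd)
  · exact hsd
  · exact hsd.trans (hlt k hdk h2)

def ladderEvent (n : ℕ) (z : ℤ) (m q : ℕ) : Set (ℕ → ℤ) :=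
  {x | partialSum x n = z ∧ partialSum x m < z ∧ IsLadderEpoch (partialSum x) m ∧
    IsLastMinOn (partialSum x) m n q}

def positiveEvent (n : ℕ) (z : ℤ) (m q : ℕ) : Set (ℕ → ℤ) :=
  {x | partialSum x n = z ∧ StaysPositive (partialSum x) n ∧
    IsLastMinOn (partialSum x) (n - q) n (n - m)}

def bridgeEvent (n : ℕ) (z : ℤ) : Set (ℕ → ℤ) :=
  {x | partialSum x n = z ∧ StaysPositive (partialSum x) n}

lemma measurableSet_ladderEvent (n : ℕ) (z : ℤ) (m q : ℕ) :
    MeasurableSet (ladderEvent n z m q) := by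
  simp only [ladderEvent, IsLadderEpoch, IsLastMinOn, measurableSet_setOfPred]
  fun_prop

lemma measurableSet_positiveEvent (n : ℕ) (z : ℤ) (m q : ℕ) :
    MeasurableSet (positiveEvent n z m q) := by
  simp only [positiveEvent, StaysPositive, IsLastMinOn, measurableSet_setOfPred]
  fun_prop

lemma measurableSet_bridgeEvent (n : ℕ) (z : ℤ) : MeasurableSet (bridgeEvent n z) := by
  simp only [bridgeEvent, StaysPositive, measurableSet_setOfPred]
  fun_prop

/-- The increments are reread in the order `q, …, n - 1`, then `m, …, q - 1`, then
`m - 1, …, 0`; indices `≥ n` are fixed. -/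
def surgery (n m q i : ℕ) : ℕ :=
  if i < n - q then q + i
  else if i < n - m then m + (i - (n - q))
  else if i < n then n - 1 - i
  else i

section Surgery

variable {n m q : ℕ}

lemma surgery_injective (hmq : m ≤ q) (hqn : q ≤ n) : (surgery n m q).Injective := by
  intro i j h
  simp only [surgery] at h
  split_ifs at h <;> omega

variable (x : ℕ → ℤ) {j : ℕ}

lemma partialSum_surgery_tail (hqj : q ≤ j) (hjn : j ≤ n) :
    partialSum (x ∘ surgery n m q) (j - q) = partialSum x j - partialSum x q := by
  have h := partialSum_comp_sub_of_shift (x := x) (σ := surgery n m q) (a := 0) (b := j - q)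
    (c := q) (Nat.zero_le _) fun i _ hi => by unfold surgery; rw [if_pos (by omega)]; omega
  simpa [show q + (j - q) = j by omega] using h

lemma partialSum_surgery_middle (hqn : q ≤ n) (hmj : m ≤ j) (hjq : j ≤ q) :
    partialSum (x ∘ surgery n m q) (n - q + (j - m))
      = partialSum x n - partialSum x q + (partialSum x j - partialSum x m) := by
  have h := partialSum_comp_sub_of_shift (x := x) (σ := surgery n m q) (a := n - q)
    (b := n - q + (j - m)) (c := m) (by omega) fun i hi hi' => by
      unfold surgery; rw [if_neg (by omega), if_pos (by omega)]
  rw [partialSum_surgery_tail x hqn le_rfl,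
    show m + (n - q + (j - m) - (n - q)) = j by omega] at h
  linarith

lemma partialSum_surgery_reverse (hmq : m ≤ q) (hqn : q ≤ n) (hjm : j ≤ m) :
    partialSum (x ∘ surgery n m q) (n - j) = partialSum x n - partialSum x j := by
  have h := partialSum_comp_sub_of_reflect (x := x) (σ := surgery n m q) (a := n - m)
    (b := n - j) (c := m) (by omega) (by omega) fun i hi hi' => by
      unfold surgery; rw [if_neg (by omega), if_neg (by omega), if_pos (by omega)]; omega
  have hmid := partialSum_surgery_middle x hqn hmq le_rfl
  rw [show n - q + (q - m) = n - m by omega] at hmid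
  rw [hmid, show m - (n - j - (n - m)) = j by omega] at h
  linarith

theorem surgery_mem_positiveEvent_iff {z : ℤ} (hmq : m ≤ q) (hqn : q < n) :
    x ∘ surgery n m q ∈ positiveEvent n z m q ↔ x ∈ ladderEvent n z m q := by
  set S := partialSum x
  set T := partialSum (x ∘ surgery n m q)
  have tail : ∀ j, q ≤ j → j ≤ n → T (j - q) = S j - S q :=
    fun j => partialSum_surgery_tail x
  have middle : ∀ j, m ≤ j → j ≤ q → T (n - q + (j - m)) = S n - S q + (S j - S m) :=
    fun j => partialSum_surgery_middle x hqn.le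
  have reverse : ∀ j ≤ m, T (n - j) = S n - S j :=
    fun j => partialSum_surgery_reverse x hmq hqn.le
  have hTn : T n = S n := by simpa [S] using reverse 0 (Nat.zero_le m)
  have hTd : T (n - m) = S n - S m := reverse m le_rfl
  have ladder_iff : IsLadderEpoch S m ↔ ∀ j, n - m < j → j ≤ n → T (n - m) < T j := by
    constructor
    · intro h j hj hjn
      have hj' := reverse (n - j) (by omega)
      rw [Nat.sub_sub_self hjn] at hj'
      rw [hTd, hj']
      linarith [h (n - j) (by omega)]
    · intro h k hk
      have := h (n - k) (by omega) (by omega)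
      rw [hTd, reverse k hk.le] at this
      linarith
  have before_iff : (∀ k, m ≤ k → k < q → S q ≤ S k) ↔
      ∀ j, n - q ≤ j → j < n - m → T (n - m) ≤ T j := by
    constructor
    · intro h j hj hjm
      have hj' := middle (j + m + q - n) (by omega) (by omega)
      rw [show n - q + (j + m + q - n - m) = j by omega] at hj'
      rw [hTd, hj']
      linarith [h (j + m + q - n) (by omega) (by omega)]
    · intro h k hmk hkq
      have := h (n - q + (k - m)) (by omega) (by omega)
      rw [hTd, middle k hmk hkq.le] at this
      linarith
  have after_iff : (∀ k, q < k → k ≤ n → S q < S k) ↔ StaysPositive T (n - q) := by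
    constructor
    · intro h j hj hjq
      have hj' := tail (q + j) (by omega) (by omega)
      rw [Nat.add_sub_cancel_left] at hj'
      rw [hj']
      linarith [h (q + j) (by omega) (by omega)]
    · intro h k hqk hkn
      have := h (k - q) (by omega) (by omega)
      rw [tail k hqk.le hkn] at this
      linarith
  constructor
  · rintro ⟨hz, hpos, hmin⟩
    have hpos' := (staysPositive_iff_of_isLastMinOn (by omega) hmin).1 hpos
    obtain ⟨-, -, hbefore, hafter⟩ := hmin
    exact ⟨hTn.symm.trans hz, by linarith [hpos'.2], ladder_iff.2 hafter, hmq, hqn.le,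
      before_iff.2 hbefore, after_iff.2 hpos'.1⟩
  · rintro ⟨hz, hmz, hladder, -, -, hbefore, hafter⟩
    have hmin : IsLastMinOn T (n - q) n (n - m) :=
      ⟨by omega, by omega, before_iff.1 hbefore, ladder_iff.1 hladder⟩
    exact ⟨hTn.trans hz, (staysPositive_iff_of_isLastMinOn (by omega) hmin).2
      ⟨after_iff.1 hafter, by linarith⟩, hmin⟩

end Surgery

lemma sum_boole_eq_one {ι : Type*} [DecidableEq ι] {s : Finset ι} {P : ι → Prop}
    [DecidablePred P] {a : ι} (ha : a ∈ s) (hP : ∀ b ∈ s, P b ↔ b = a) :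
    ∑ b ∈ s, (if P b then 1 else 0) = 1 := by
  rw [sum_congr rfl fun b hb => if_congr (hP b hb) rfl rfl, sum_ite_eq' s a, if_pos ha]

section Counting

open scoped Classical

variable {n : ℕ} {z : ℤ} (x : ℕ → ℤ)

lemma sum_boole_ladderEvent (hx : partialSum x n = z) {m : ℕ} (hm : m < n) :
    ∑ q ∈ range n, (if x ∈ ladderEvent n z m q then 1 else 0)
      = if partialSum x m < z ∧ IsLadderEpoch (partialSum x) m then 1 else 0 := by
  by_cases hA : partialSum x m < z ∧ IsLadderEpoch (partialSum x) m
  · obtain ⟨p, hp⟩ := exists_isLastMinOn (partialSum x) hm.le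
    have hpn : p < n := by
      refine lt_of_le_of_ne hp.2.1 fun hpn => ?_
      have := hp.2.2.1 m le_rfl (hpn ▸ hm)
      rw [hpn, hx] at this
      exact this.not_gt hA.1
    rw [if_pos hA]
    exact sum_boole_eq_one (mem_range.2 hpn) fun q _ =>
      ⟨fun hq => (hp.unique hq.2.2.2).symm, fun hq => hq ▸ ⟨hx, hA.1, hA.2, hp⟩⟩
  · rw [if_neg hA]
    exact sum_eq_zero fun q _ => if_neg fun hq => hA ⟨hq.2.1, hq.2.2.1⟩

lemma card_filter_ladderEvent :
    #{p ∈ range n ×ˢ range n | x ∈ ladderEvent n z p.1 p.2}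
      = if partialSum x n = z then
          {m | partialSum x m < z ∧ IsLadderEpoch (partialSum x) m}.ncard else 0 := by
  split_ifs with hx
  · have hlt : ∀ m, partialSum x m < z → IsLadderEpoch (partialSum x) m → m < n := by
      intro m hmz hm
      by_contra! hnm
      rcases hnm.eq_or_lt with rfl | hnm
      · exact hmz.ne hx
      · exact (hm n hnm).not_gt (hx ▸ hmz)
    have hset : {m | partialSum x m < z ∧ IsLadderEpoch (partialSum x) m}
        = ↑{m ∈ range n | partialSum x m < z ∧ IsLadderEpoch (partialSum x) m} := by
      ext m
      simp only [Set.mem_ofPred_eq, coe_filter, mem_range]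
      exact ⟨fun h => ⟨hlt m h.1 h.2, h⟩, And.right⟩
    rw [hset, Set.ncard_coe_finset, card_filter, card_filter, sum_product]
    exact sum_congr rfl fun m hm => sum_boole_ladderEvent x hx (mem_range.1 hm)
  · exact card_eq_zero.2 (filter_eq_empty_iff.2 fun p _ hp => hx hp.1)

lemma sum_boole_positiveEvent (hx : x ∈ bridgeEvent n z) {q : ℕ} (hq : q < n) :
    ∑ m ∈ range n, (if x ∈ positiveEvent n z m q then 1 else 0) = 1 := by
  obtain ⟨p, hp⟩ := exists_isLastMinOn (partialSum x) (Nat.sub_le n q)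
  refine sum_boole_eq_one (a := n - p) (mem_range.2 (by have := hp.1; omega)) fun m hm => ?_
  have hm := mem_range.1 hm
  constructor
  · intro h
    have := hp.unique h.2.2
    omega
  · intro h
    refine ⟨hx.1, hx.2, ?_⟩
    rwa [h, Nat.sub_sub_self hp.2.1]

lemma card_filter_positiveEvent :
    #{p ∈ range n ×ˢ range n | x ∈ positiveEvent n z p.1 p.2}
      = if x ∈ bridgeEvent n z then n else 0 := by
  split_ifs with hx
  · rw [card_filter, sum_product_right, sum_congr rfl fun q hq =>
      sum_boole_positiveEvent x hx (mem_range.1 hq), sum_const, card_range, smul_eq_mul, mul_one]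
  · exact card_eq_zero.2 (filter_eq_empty_iff.2 fun p _ hp => hx ⟨hp.1, hp.2.1⟩)

end Counting

section Probability

variable {Ω : Type*} [MeasurableSpace Ω] (μ : Measure Ω)

lemma integral_card_filter_mem [IsFiniteMeasure μ] {ι : Type*} (P : Finset ι) {E : ι → Set Ω}
    [∀ p ω, Decidable (ω ∈ E p)] (hE : ∀ p ∈ P, MeasurableSet (E p)) :
    ∫ ω, (#{p ∈ P | ω ∈ E p} : ℝ) ∂μ = ∑ p ∈ P, μ.real (E p) := by
  have hsum (ω : Ω) :
      (#{p ∈ P | ω ∈ E p} : ℝ) = ∑ p ∈ P, (E p).indicator (fun _ => (1 : ℝ)) ω := by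
    simp only [natCast_card_filter, Set.indicator_apply]
  simp_rw [hsum]
  rw [integral_finsetSum _ fun p hp => (integrable_const (1 : ℝ)).indicator (hE p hp)]
  refine sum_congr rfl fun p hp => ?_
  rw [integral_indicator_const _ (hE p hp), smul_eq_mul, mul_one]

lemma measure_preimage_precomp_eq {ι β : Type*} [MeasurableSpace β] {ξ : ι → Ω → β}
    (hmeas : ∀ i, Measurable (ξ i)) (hindep : iIndepFun ξ μ) {ν : Measure β}
    (hident : ∀ i, μ.map (ξ i) = ν) {σ : ι → ι} (hσ : σ.Injective) {E : Set (ι → β)}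
    (hE : MeasurableSet E) :
    μ ((fun ω i => ξ (σ i) ω) ⁻¹' E) = μ ((fun ω i => ξ i ω) ⁻¹' E) := by
  have hmap : μ.map (fun ω i => ξ (σ i) ω) = μ.map (fun ω i => ξ i ω) := by
    rw [(hindep.precomp hσ).map_fun_eq_infinitePi_map fun i => hmeas _,
      hindep.map_fun_eq_infinitePi_map hmeas]
    simp only [hident]
  rw [← Measure.map_apply (by fun_prop) hE, hmap, Measure.map_apply (by fun_prop) hE]

lemma measure_preimage_ladderEvent {ξ : ℕ → Ω → ℤ} (hmeas : ∀ i, Measurable (ξ i))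
    (hindep : iIndepFun ξ μ) {ν : Measure ℤ} (hident : ∀ i, μ.map (ξ i) = ν) {n : ℕ} (z : ℤ)
    {m q : ℕ} (hm : m < n) (hq : q < n) :
    μ ((fun ω i => ξ i ω) ⁻¹' ladderEvent n z m q)
      = μ ((fun ω i => ξ i ω) ⁻¹' positiveEvent n z m q) := by
  rcases le_or_gt m q with hmq | hqm
  · have hpre : (fun ω i => ξ i ω) ⁻¹' ladderEvent n z m q
        = (fun ω i => ξ (surgery n m q i) ω) ⁻¹' positiveEvent n z m q := by
      ext ω
      exact (surgery_mem_positiveEvent_iff (fun i => ξ i ω) hmq hq).symm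
    rw [hpre, measure_preimage_precomp_eq μ hmeas hindep hident (surgery_injective hmq hq.le)
      (measurableSet_positiveEvent n z m q)]
  · have hL : ladderEvent n z m q = ∅ :=
      Set.eq_empty_of_forall_notMem fun x hx => by have := hx.2.2.2.1; omega
    have hP : positiveEvent n z m q = ∅ :=
      Set.eq_empty_of_forall_notMem fun x hx => by have := hx.2.2.1; omega
    rw [hL, hP]

lemma setIntegral_ncard_ladder_eq_sum [IsFiniteMeasure μ] {X : Ω → ℕ → ℤ} (hX : Measurable X)
    (n : ℕ) (z : ℤ) :
    ∫ ω in {ω | partialSum (X ω) n = z},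
        ({m | partialSum (X ω) m < z ∧ IsLadderEpoch (partialSum (X ω)) m}.ncard : ℝ) ∂μ
      = ∑ p ∈ range n ×ˢ range n, μ.real (X ⁻¹' ladderEvent n z p.1 p.2) := by
  classical
  rw [← integral_card_filter_mem μ _ fun p _ => hX (measurableSet_ladderEvent n z p.1 p.2),
    ← integral_indicator (measurableSet_setOfPred.2 (by fun_prop))]
  congr 1 with ω
  rw [Set.indicator_apply]
  simp only [Set.mem_preimage]
  rw [card_filter_ladderEvent]
  split_ifs <;> simp_all

lemma sum_measureReal_positiveEvent [IsFiniteMeasure μ] {X : Ω → ℕ → ℤ} (hX : Measurable X)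
    (n : ℕ) (z : ℤ) :
    ∑ p ∈ range n ×ˢ range n, μ.real (X ⁻¹' positiveEvent n z p.1 p.2)
      = n * μ.real (X ⁻¹' bridgeEvent n z) := by
  classical
  rw [← integral_card_filter_mem μ _ fun p _ => hX (measurableSet_positiveEvent n z p.1 p.2),
    mul_comm, ← smul_eq_mul, ← integral_indicator_const _ (hX (measurableSet_bridgeEvent n z))]
  congr 1 with ω
  rw [Set.indicator_apply]
  simp only [Set.mem_preimage]
  rw [card_filter_positiveEvent]
  split_ifs <;> simp_all

end Probability

end AliliDoney

open AliliDoney Finset in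
theorem stmt2_general {Ω : Type*} [MeasurableSpace Ω] (μ : Measure Ω) [IsProbabilityMeasure μ]
    (ξ : ℕ → Ω → ℤ) (hmeas : ∀ k, Measurable (ξ k))
    (hindep : iIndepFun ξ μ)
    (hident : ∀ k, μ.map (ξ k) = μ.map (ξ 0))
    (Z : ℕ → Ω → ℤ) (hZ : ∀ n ω, Z n ω = ∑ k ∈ Finset.range n, ξ k ω)
    (Nplus : ℤ → Ω → ℕ)
    (hN : ∀ z ω, Nplus z ω
        = Set.ncard {m : ℕ | Z m ω < z ∧ ∀ k < m, Z k ω < Z m ω})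
    (n : ℕ) (hn : 1 ≤ n) (z : ℤ) :
    (μ {ω | Z n ω = z ∧ ∀ k, 1 ≤ k → k ≤ n → 0 < Z k ω}).toReal
      = (1 / n) * ∫ ω in {ω | Z n ω = z}, (Nplus z ω : ℝ) ∂μ := by
  have hZ' : ∀ k ω, Z k ω = partialSum (fun i => ξ i ω) k := hZ
  simp only [hN, hZ', ← IsLadderEpoch.eq_1]
  have hX : Measurable fun ω i => ξ i ω := measurable_pi_lambda _ hmeas
  have hsurgery : ∀ p ∈ range n ×ˢ range n,
      μ.real ((fun ω i => ξ i ω) ⁻¹' ladderEvent n z p.1 p.2)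
        = μ.real ((fun ω i => ξ i ω) ⁻¹' positiveEvent n z p.1 p.2) := fun p hp => by
    rw [mem_product, mem_range, mem_range] at hp
    rw [measureReal_def, measureReal_def,
      measure_preimage_ladderEvent μ hmeas hindep hident z hp.1 hp.2]
  change μ.real ((fun ω i => ξ i ω) ⁻¹' bridgeEvent n z) = _
  rw [setIntegral_ncard_ladder_eq_sum μ hX, sum_congr rfl hsurgery,
    sum_measureReal_positiveEvent μ hX]
  field_simp

/-- Alili–Doney identity, strict case:
`P(Z_n = z, Z_1,…,Z_n > 0) = (1/n) E[N⁺(z) ; Z_n = z]`, where `N⁺(z)` is the number of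
strict ascending ladder epochs `m ≥ 0` with `Z_m < z`. -/
theorem stmt2 {Ω : Type*} [MeasurableSpace Ω] (μ : Measure Ω) [IsProbabilityMeasure μ]
    (ξ : ℕ → Ω → ℤ) (hmeas : ∀ k, Measurable (ξ k))
    (hindep : iIndepFun ξ μ)
    (hident : ∀ k, μ.map (ξ k) = μ.map (ξ 0))
    (Z : ℕ → Ω → ℤ) (hZ : ∀ n ω, Z n ω = ∑ k ∈ Finset.range n, ξ k ω)
    (Nplus : ℤ → Ω → ℕ)
    (hN : ∀ z ω, Nplus z ω
        = Set.ncard {m : ℕ | Z m ω < z ∧ ∀ k < m, Z k ω < Z m ω})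
    (n : ℕ) (hn : 1 ≤ n) (z : ℤ) (hz : 0 < z) :
    (μ {ω | Z n ω = z ∧ ∀ k, 1 ≤ k → k ≤ n → 0 < Z k ω}).toReal
      = (1 / n) * ∫ ω in {ω | Z n ω = z}, (Nplus z ω : ℝ) ∂μ :=
  stmt2_general μ ξ hmeas hindep hident Z hZ Nplus hN n hn z
end

section
/- (First-minimum decomposition) For an integer random walk Z with Z_0 = w > 0 and 0 < w ≤ z, the probability u_n(w,z) = P_w(Z_n = z, Z_k > 0 for k=1,...,n) satisfies u_n(w,z) = u^0_n(z−w) + Σ_{m=0}^{n} Σ_{r=1}^{w−1} û_m(w−r) · u^0_{n−m}(z−r), where û_m(a) = P(Ẑ_m = a, Ẑ is at a strict new maximum at time m) for the reversed walk Ẑ, and u^0_k(a) = P(Z_k = a, Z_j ≥ 0 for j = 0,...,k). -/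
/-!
Split a path according to the first time `m ≤ n` at which it attains its minimum over `[0, n]`.
If that minimum is the starting value `w`, the path stays `≥ w` and contributes `u⁰_n(z - w)`.
Otherwise the minimum is some `r ∈ [1, w - 1]`, reached at a time `m ≥ 1`: the first `m` steps
bring the walk to a strict new minimum `r - w` (a strict new maximum `w - r` of the reversed walk
`-ξ`), and the remaining `n - m` steps stay `≥ r` and end at `z`. These two events concern the
disjoint blocks of steps `[0, m)` and `[m, n)`, hence are independent, and the second block has
the same law as the first `n - m` steps.
-/

open MeasureTheory ProbabilityTheory Finset

section DependsOn

variable {ι β : Type*} {P : (ι → β) → Prop} {s : Finset ι}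

theorem DependsOn.preimage_image_restrict (hP : DependsOn P s) :
    s.restrict ⁻¹' (s.restrict '' {x | P x}) = {x | P x} := by
  ext x
  refine ⟨fun ⟨y, hy, hyx⟩ => ?_, fun hx => ⟨x, hx, rfl⟩⟩
  have : P y = P x := hP fun i hi => congrFun hyx ⟨i, hi⟩
  exact cast this hy

variable [MeasurableSpace β] [MeasurableSingletonClass β] [Countable β]

theorem DependsOn.measurableSet_setOf (hP : DependsOn P s) : MeasurableSet {x | P x} := by
  rw [← hP.preimage_image_restrict]
  exact (measurable_pi_lambda _ fun i => measurable_pi_apply _) MeasurableSet.of_discrete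

end DependsOn

namespace ProbabilityTheory

section Independence

variable {Ω ι β : Type*} [MeasurableSpace Ω] [MeasurableSpace β] {μ : Measure Ω}
  {ξ : ι → Ω → β}

theorem iIndepFun.measure_setOf_and_eq_mul [MeasurableSingletonClass β] [Countable β]
    (hmeas : ∀ i, Measurable (ξ i)) (hindep : iIndepFun ξ μ) {S T : Finset ι}
    (hST : Disjoint S T) {P Q : (ι → β) → Prop} (hP : DependsOn P S) (hQ : DependsOn Q T) :
    μ {ω | P (ξ · ω) ∧ Q (ξ · ω)} = μ {ω | P (ξ · ω)} * μ {ω | Q (ξ · ω)} := by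
  have hblock {R : (ι → β) → Prop} {U : Finset ι} (hR : DependsOn R U) :
      {ω | R (ξ · ω)} = (fun ω (i : U) => ξ i ω) ⁻¹' (U.restrict '' {x | R x}) :=
    congrArg (fun A => (fun ω i => ξ i ω) ⁻¹' A) hR.preimage_image_restrict.symm
  rw [hblock hP, hblock hQ, ← (hindep.indepFun_finset S T hST hmeas).measure_inter_preimage_eq_mul
    _ _ .of_discrete .of_discrete, ← hblock hP, ← hblock hQ]
  rfl

end Independence

section IID

variable {Ω β : Type*} [MeasurableSpace Ω] [MeasurableSpace β] {μ : Measure Ω}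
  {ξ : ℕ → Ω → β}

theorem iIndepFun.map_shift_eq (hmeas : ∀ i, Measurable (ξ i)) (hindep : iIndepFun ξ μ)
    (hident : ∀ i, μ.map (ξ i) = μ.map (ξ 0)) (m : ℕ) :
    μ.map (fun ω i => ξ (m + i) ω) = μ.map (fun ω i => ξ i ω) := by
  rw [(hindep.precomp (add_right_injective m)).map_fun_eq_infinitePi_map (fun _ => hmeas _),
    hindep.map_fun_eq_infinitePi_map hmeas]
  simp only [hident]

variable [MeasurableSingletonClass β] [Countable β]

theorem iIndepFun.measure_setOf_shift (hmeas : ∀ i, Measurable (ξ i)) (hindep : iIndepFun ξ μ)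
    (hident : ∀ i, μ.map (ξ i) = μ.map (ξ 0)) {Q : (ℕ → β) → Prop} {T : Finset ℕ}
    (hQ : DependsOn Q T) (m : ℕ) :
    μ {ω | Q (fun i => ξ (m + i) ω)} = μ {ω | Q (ξ · ω)} := by
  have hshift : Measurable (fun ω i => ξ (m + i) ω) := measurable_pi_lambda _ fun _ => hmeas _
  have h := congrArg (· {x | Q x}) (hindep.map_shift_eq hmeas hident m)
  rwa [Measure.map_apply hshift hQ.measurableSet_setOf,
    Measure.map_apply (measurable_pi_lambda _ hmeas) hQ.measurableSet_setOf] at h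

theorem iIndepFun.measure_setOf_and_shift_eq_mul (hmeas : ∀ i, Measurable (ξ i))
    (hindep : iIndepFun ξ μ) (hident : ∀ i, μ.map (ξ i) = μ.map (ξ 0)) {m k : ℕ}
    {P Q : (ℕ → β) → Prop} (hP : DependsOn P (range m)) (hQ : DependsOn Q (range k)) :
    μ {ω | P (ξ · ω) ∧ Q (fun i => ξ (m + i) ω)} = μ {ω | P (ξ · ω)} * μ {ω | Q (ξ · ω)} := by
  have hQm : DependsOn (fun x : ℕ → β => Q (fun i => x (m + i))) (Ico m (m + k)) := by
    intro x y h
    exact hQ fun i hi => h (m + i) (by simp only [coe_range, Set.mem_Iio] at hi; simpa)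
  have hdisj : Disjoint (range m) (Ico m (m + k)) := by
    rw [range_eq_Ico]
    exact Ico_disjoint_Ico_consecutive 0 m (m + k)
  rw [hindep.measure_setOf_and_eq_mul hmeas hdisj hP hQm,
    hindep.measure_setOf_shift hmeas hident hQ m]

end IID

end ProbabilityTheory

namespace IntWalk

def NonnegWalkTo (k : ℕ) (a : ℤ) (x : ℕ → ℤ) : Prop :=
  (∑ i ∈ range k, x i) = a ∧ ∀ j ≤ k, 0 ≤ ∑ i ∈ range j, x i

def StrictMinAt (m : ℕ) (b : ℤ) (x : ℕ → ℤ) : Prop :=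
  (∑ i ∈ range m, x i) = b ∧ ∀ j < m, b < ∑ i ∈ range j, x i

-- For `m ≤ n`: the walk with steps `x` attains its minimum over the times `0, …, n` first at
-- time `m`, with value `b`, and is at `c` at time `n`.
def FirstMinAt (n m : ℕ) (b c : ℤ) (x : ℕ → ℤ) : Prop :=
  StrictMinAt m b x ∧ NonnegWalkTo (n - m) (c - b) (fun i => x (m + i))

variable {x : ℕ → ℤ} {n m : ℕ}

theorem nonnegWalkTo_shift_iff (hm : m ≤ n) (a : ℤ) :
    NonnegWalkTo (n - m) a (fun i => x (m + i)) ↔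
      (∑ i ∈ range n, x i) = (∑ i ∈ range m, x i) + a ∧
        ∀ j, m ≤ j → j ≤ n → (∑ i ∈ range m, x i) ≤ ∑ i ∈ range j, x i := by
  have hsplit (j : ℕ) (hj : m ≤ j) :
      (∑ i ∈ range j, x i) = (∑ i ∈ range m, x i) + ∑ i ∈ range (j - m), x (m + i) := by
    rw [← sum_range_add, Nat.add_sub_cancel' hj]
  rw [NonnegWalkTo, hsplit n hm]
  refine and_congr (by omega) ⟨fun h j hmj hjn => ?_, fun h j hj => ?_⟩
  · linarith [hsplit j hmj, h (j - m) (by omega)]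
  · have hmj := hsplit (m + j) (by omega)
    rw [Nat.add_sub_cancel_left] at hmj
    linarith [h (m + j) (by omega) (by omega)]

theorem exists_strictMinAt_le (n : ℕ) (x : ℕ → ℤ) :
    ∃ m ≤ n, StrictMinAt m (∑ i ∈ range m, x i) x ∧
      ∀ j ≤ n, (∑ i ∈ range m, x i) ≤ ∑ i ∈ range j, x i := by
  have hmin : ∃ m, m ≤ n ∧ ∀ j ≤ n, (∑ i ∈ range m, x i) ≤ ∑ i ∈ range j, x i := by
    obtain ⟨m, hm, hle⟩ := exists_min_image (range (n + 1)) (fun j => ∑ i ∈ range j, x i)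
      nonempty_range_add_one
    exact ⟨m, by simpa [Nat.lt_succ_iff] using hm, fun j hj => hle j (by simpa [Nat.lt_succ_iff])⟩
  obtain ⟨hle, hmin_le⟩ := Nat.find_spec hmin
  refine ⟨Nat.find hmin, hle, ⟨rfl, fun j hj => ?_⟩, hmin_le⟩
  by_contra! hge
  exact Nat.find_min hmin hj ⟨by omega, fun i hi => hge.trans (hmin_le i hi)⟩

theorem exists_firstMinAt (n : ℕ) (x : ℕ → ℤ) :
    ∃ m ≤ n, FirstMinAt n m (∑ i ∈ range m, x i) (∑ i ∈ range n, x i) x := by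
  obtain ⟨m, hm, hstrict, hle⟩ := exists_strictMinAt_le n x
  exact ⟨m, hm, hstrict, (nonnegWalkTo_shift_iff hm _).2 ⟨by ring, fun j _ hj => hle j hj⟩⟩

theorem FirstMinAt.le {b c : ℤ} (h : FirstMinAt n m b c x) (hm : m ≤ n) {j : ℕ} (hj : j ≤ n) :
    b ≤ ∑ i ∈ range j, x i := by
  obtain ⟨⟨hb, hlt⟩, hnonneg⟩ := h
  rcases lt_or_ge j m with hjm | hmj
  · exact (hlt j hjm).le
  · exact hb ▸ ((nonnegWalkTo_shift_iff hm _).1 hnonneg).2 j hmj hj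

theorem FirstMinAt.unique {m' : ℕ} {b b' c c' : ℤ} (h : FirstMinAt n m b c x)
    (h' : FirstMinAt n m' b' c' x) (hm : m ≤ n) (hm' : m' ≤ n) : m = m' ∧ b = b' := by
  have hb := h.1.1
  have hb' := h'.1.1
  obtain hlt | rfl | hlt := lt_trichotomy m m'
  · linarith [h'.1.2 m hlt, h.le hm hm']
  · exact ⟨rfl, hb.symm.trans hb'⟩
  · linarith [h.1.2 m' hlt, h'.le hm' hm]

theorem pos_walk_iff_nonnegWalkTo_or_firstMinAt {w z : ℤ} (hw : 0 < w) :
    (w + ∑ i ∈ range n, x i = z ∧ ∀ k, 1 ≤ k → k ≤ n → 0 < w + ∑ i ∈ range k, x i) ↔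
      NonnegWalkTo n (z - w) x ∨
        ∃ p ∈ range (n + 1) ×ˢ Icc (1 : ℤ) (w - 1), FirstMinAt n p.1 (p.2 - w) (z - w) x := by
  constructor
  · rintro ⟨hend, hpos⟩
    by_cases hnonneg : ∀ j ≤ n, 0 ≤ ∑ i ∈ range j, x i
    · exact .inl ⟨by omega, hnonneg⟩
    push Not at hnonneg
    obtain ⟨j, hjn, hj⟩ := hnonneg
    obtain ⟨m, hm, hfirst⟩ := exists_firstMinAt n x
    have hneg : (∑ i ∈ range m, x i) < 0 := (hfirst.le hm hjn).trans_lt hj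
    have hm0 : m ≠ 0 := by rintro rfl; simp at hneg
    have hposm := hpos m (by omega) hm
    refine .inr ⟨(m, w + ∑ i ∈ range m, x i), ?_, ?_⟩
    · simp only [mem_product, mem_range, mem_Icc]
      omega
    · simpa [← hend] using hfirst
  · rintro (⟨hend, hnonneg⟩ | ⟨⟨m, r⟩, hp, hfirst⟩)
    · exact ⟨by linarith, fun k _ hk => by linarith [hnonneg k hk]⟩
    simp only [mem_product, mem_range, mem_Icc] at hp
    obtain ⟨hb, hnonneg⟩ := hfirst
    refine ⟨?_, fun k _ hk => ?_⟩
    · linarith [((nonnegWalkTo_shift_iff (by omega : m ≤ n) _).1 hnonneg).1, hb.1]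
    · linarith [FirstMinAt.le ⟨hb, hnonneg⟩ (by omega) hk]

theorem not_nonnegWalkTo_of_firstMinAt {a b c : ℤ} (h : FirstMinAt n m b c x) (hm : m ≤ n)
    (hb : b < 0) : ¬ NonnegWalkTo n a x := fun h0 => by
  linarith [h0.2 m hm, h.1.1]

theorem strictMinAt_neg_iff (m : ℕ) (a : ℤ) (x : ℕ → ℤ) :
    ((∑ i ∈ range m, -x i) = a ∧ ∀ j < m, (∑ i ∈ range j, -x i) < ∑ i ∈ range m, -x i) ↔
      StrictMinAt m (-a) x := by
  simp only [StrictMinAt, sum_neg_distrib, neg_lt_neg_iff, neg_eq_iff_eq_neg]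
  exact and_congr_right fun h => by rw [h]

theorem sum_range_eq_of_eqOn {k : ℕ} {x y : ℕ → ℤ} (h : ∀ i ∈ (range k : Set ℕ), x i = y i)
    {j : ℕ} (hj : j ≤ k) : ∑ i ∈ range j, x i = ∑ i ∈ range j, y i :=
  sum_congr rfl fun i hi => h i (by simp only [coe_range, Set.mem_Iio]; simp at hi; omega)

theorem dependsOn_nonnegWalkTo (k : ℕ) (a : ℤ) : DependsOn (NonnegWalkTo k a) (range k) := by
  intro x y h
  simp only [NonnegWalkTo, sum_range_eq_of_eqOn h le_rfl]
  exact propext (and_congr_right' (forall₂_congr fun j hj => by rw [sum_range_eq_of_eqOn h hj]))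

theorem dependsOn_strictMinAt (m : ℕ) (b : ℤ) : DependsOn (StrictMinAt m b) (range m) := by
  intro x y h
  simp only [StrictMinAt, sum_range_eq_of_eqOn h le_rfl]
  exact propext (and_congr_right' (forall₂_congr fun j hj => by rw [sum_range_eq_of_eqOn h hj.le]))

section Measure

variable {Ω : Type*} [MeasurableSpace Ω] {μ : Measure Ω} {ξ : ℕ → Ω → ℤ}

theorem measurableSet_setOf_firstMinAt (hmeas : ∀ i, Measurable (ξ i)) (b c : ℤ) :
    MeasurableSet {ω | FirstMinAt n m b c (ξ · ω)} :=
  (measurable_pi_lambda _ hmeas (dependsOn_strictMinAt _ _).measurableSet_setOf).inter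
    (measurable_pi_lambda _ (fun _ => hmeas _) (dependsOn_nonnegWalkTo _ _).measurableSet_setOf)

theorem measureReal_pos_walk_eq_add_sum_firstMinAt [IsFiniteMeasure μ]
    (hmeas : ∀ i, Measurable (ξ i)) {w : ℤ} (hw : 0 < w) (z : ℤ) :
    μ.real {ω | w + ∑ i ∈ range n, ξ i ω = z ∧
        ∀ k, 1 ≤ k → k ≤ n → 0 < w + ∑ i ∈ range k, ξ i ω}
      = μ.real {ω | NonnegWalkTo n (z - w) (ξ · ω)}
        + ∑ p ∈ range (n + 1) ×ˢ Icc (1 : ℤ) (w - 1),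
            μ.real {ω | FirstMinAt n p.1 (p.2 - w) (z - w) (ξ · ω)} := by
  set s := range (n + 1) ×ˢ Icc (1 : ℤ) (w - 1)
  have hset : {ω | w + ∑ i ∈ range n, ξ i ω = z ∧
        ∀ k, 1 ≤ k → k ≤ n → 0 < w + ∑ i ∈ range k, ξ i ω}
      = {ω | NonnegWalkTo n (z - w) (ξ · ω)}
        ∪ ⋃ p ∈ s, {ω | FirstMinAt n p.1 (p.2 - w) (z - w) (ξ · ω)} := by
    ext ω
    simp only [Set.mem_union, Set.mem_iUnion, Set.mem_ofPred_eq, exists_prop]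
    exact pos_walk_iff_nonnegWalkTo_or_firstMinAt hw
  have hdisj : Disjoint {ω | NonnegWalkTo n (z - w) (ξ · ω)}
      (⋃ p ∈ s, {ω | FirstMinAt n p.1 (p.2 - w) (z - w) (ξ · ω)}) := by
    refine Set.disjoint_left.2 fun ω h0 h1 => ?_
    obtain ⟨p, hp, hω⟩ := Set.mem_iUnion₂.1 h1
    simp only [s, mem_product, mem_range, mem_Icc] at hp
    exact not_nonnegWalkTo_of_firstMinAt hω (by omega) (by omega) h0
  have hpairwise : (s : Set (ℕ × ℤ)).PairwiseDisjoint
      fun p => {ω | FirstMinAt n p.1 (p.2 - w) (z - w) (ξ · ω)} := by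
    refine fun p hp q hq hpq => Set.disjoint_left.2 fun ω hωp hωq => hpq ?_
    simp only [s, coe_product, Set.mem_prod, coe_range, Set.mem_Iio] at hp hq
    obtain ⟨hm, hr⟩ := hωp.unique hωq (by omega) (by omega)
    exact Prod.ext hm (by omega)
  have hmeasPiece (p : ℕ × ℤ) :
      MeasurableSet {ω | FirstMinAt n p.1 (p.2 - w) (z - w) (ξ · ω)} :=
    measurableSet_setOf_firstMinAt hmeas _ _
  rw [hset, measureReal_union hdisj (Finset.measurableSet_biUnion _ fun p _ => hmeasPiece p)
    (measure_ne_top _ _) (measure_ne_top _ _),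
    measureReal_biUnion_finset hpairwise (fun p _ => hmeasPiece p) fun _ _ => measure_ne_top _ _]

theorem measure_setOf_firstMinAt (hmeas : ∀ i, Measurable (ξ i))
    (hindep : iIndepFun ξ μ) (hident : ∀ i, μ.map (ξ i) = μ.map (ξ 0)) (b c : ℤ) :
    μ {ω | FirstMinAt n m b c (ξ · ω)}
      = μ {ω | StrictMinAt m b (ξ · ω)} * μ {ω | NonnegWalkTo (n - m) (c - b) (ξ · ω)} :=
  hindep.measure_setOf_and_shift_eq_mul hmeas hident (dependsOn_strictMinAt m b)
    (dependsOn_nonnegWalkTo (n - m) (c - b))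

end Measure

end IntWalk

open IntWalk in
theorem stmt16_general {Ω : Type*} [MeasurableSpace Ω] (μ : Measure Ω) [IsProbabilityMeasure μ]
    (ξ : ℕ → Ω → ℤ) (hmeas : ∀ k, Measurable (ξ k))
    (hindep : iIndepFun ξ μ)
    (hident : ∀ k, μ.map (ξ k) = μ.map (ξ 0))
    (w z : ℤ) (hw : 0 < w) (n : ℕ)
    (Z : ℕ → Ω → ℤ) (hZ : ∀ m ω, Z m ω = w + ∑ k ∈ Finset.range m, ξ k ω)
    (uhat : ℕ → ℤ → ℝ)
    (huhat : ∀ m a, uhat m a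
        = (μ {ω | (∑ k ∈ Finset.range m, -ξ k ω) = a ∧
            ∀ j < m, (∑ k ∈ Finset.range j, -ξ k ω) < ∑ k ∈ Finset.range m, -ξ k ω}).toReal)
    (u0 : ℕ → ℤ → ℝ)
    (hu0 : ∀ m a, u0 m a
        = (μ {ω | (∑ k ∈ Finset.range m, ξ k ω) = a ∧
            ∀ j ≤ m, 0 ≤ ∑ k ∈ Finset.range j, ξ k ω}).toReal) :
    (μ {ω | Z n ω = z ∧ ∀ k, 1 ≤ k → k ≤ n → 0 < Z k ω}).toReal
      = u0 n (z - w)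
        + ∑ m ∈ Finset.range (n + 1), ∑ r ∈ Finset.Icc (1 : ℤ) (w - 1),
            uhat m (w - r) * u0 (n - m) (z - r) := by
  have hZpos : {ω | Z n ω = z ∧ ∀ k, 1 ≤ k → k ≤ n → 0 < Z k ω}
      = {ω | w + ∑ i ∈ range n, ξ i ω = z ∧
          ∀ k, 1 ≤ k → k ≤ n → 0 < w + ∑ i ∈ range k, ξ i ω} := by
    simp only [hZ]
  rw [← measureReal_def, hZpos, measureReal_pos_walk_eq_add_sum_firstMinAt hmeas hw, sum_product,
    hu0]
  refine congrArg _ (sum_congr rfl fun m _ => sum_congr rfl fun r _ => ?_)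
  rw [measureReal_def, measure_setOf_firstMinAt hmeas hindep hident, ENNReal.toReal_mul, huhat,
    hu0, sub_sub_sub_cancel_right]
  simp only [strictMinAt_neg_iff, neg_sub]
  rfl

/-- First-minimum decomposition: for an integer random walk started at `w` with
`0 < w ≤ z`,
`u_n(w,z) = u⁰_n(z−w) + Σ_{m=0}^{n} Σ_{r=1}^{w−1} û_m(w−r) u⁰_{n−m}(z−r)`,
where `û_m(a)` is the probability that the reversed walk is at a strict new maximum `a`
at time `m`, and `u⁰_k(a)` the probability the walk (from `0`) stays `≥ 0` and ends at `a`. -/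
theorem stmt16 {Ω : Type*} [MeasurableSpace Ω] (μ : Measure Ω) [IsProbabilityMeasure μ]
    (ξ : ℕ → Ω → ℤ) (hmeas : ∀ k, Measurable (ξ k))
    (hindep : iIndepFun ξ μ)
    (hident : ∀ k, μ.map (ξ k) = μ.map (ξ 0))
    (w z : ℤ) (hw : 0 < w) (hwz : w ≤ z) (n : ℕ)
    (Z : ℕ → Ω → ℤ) (hZ : ∀ m ω, Z m ω = w + ∑ k ∈ Finset.range m, ξ k ω)
    (uhat : ℕ → ℤ → ℝ)
    (huhat : ∀ m a, uhat m a
        = (μ {ω | (∑ k ∈ Finset.range m, -ξ k ω) = a ∧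
            ∀ j < m, (∑ k ∈ Finset.range j, -ξ k ω) < ∑ k ∈ Finset.range m, -ξ k ω}).toReal)
    (u0 : ℕ → ℤ → ℝ)
    (hu0 : ∀ m a, u0 m a
        = (μ {ω | (∑ k ∈ Finset.range m, ξ k ω) = a ∧
            ∀ j ≤ m, 0 ≤ ∑ k ∈ Finset.range j, ξ k ω}).toReal) :
    (μ {ω | Z n ω = z ∧ ∀ k, 1 ≤ k → k ≤ n → 0 < Z k ω}).toReal
      = u0 n (z - w)
        + ∑ m ∈ Finset.range (n + 1), ∑ r ∈ Finset.Icc (1 : ℤ) (w - 1),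
            uhat m (w - r) * u0 (n - m) (z - r) :=
  stmt16_general μ ξ hmeas hindep hident w z hw n Z hZ uhat huhat u0 hu0
end
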